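/- arXiv:2410.08868 — 2 statements merged into one kernel-verified Lean document; each statement's English description precedes it below -/
import Mathlib

section
/- Let $(a_k), (z_k), (y_k)$ be nonnegative sequences and $\eta_k, c_1, \dots, c_8 > 0$ constants satisfying: (actor) $a_{k+1} \le a_k - c_1\eta_k y_k^2 + c_2\eta_k y_k z_k + c_3\eta_k^2$; (critic) $z_{k+1}^2 \le z_k^2 - c_4\eta_k z_k^2 + c_5\eta_k^2 + c_7\eta_k y_k z_k$, with $z_k \le c_z$ for all $k$; and (GDL) $a_k \le c_8 y_k$. Suppose moreover $c_4 \ge \frac{(c_2+c_7)^2}{2c_1}$. Then there exist constants $C_1, C_2 > 0$ (depending only on $c_1,\dots,c_8,c_z$) such that $x_k := a_k + z_k^2$ satisfies $x_{k+1} \le x_k - C_1 \eta_k x_k^2 + C_2 \eta_k^2$. -/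
set_option maxHeartbeats 1600000 in
theorem stmt_11 (a z y η : ℕ → ℝ)
    (ha : ∀ k, 0 ≤ a k) (hz : ∀ k, 0 ≤ z k) (hy : ∀ k, 0 ≤ y k)
    (hη : ∀ k, 0 < η k)
    (c₁ c₂ c₃ c₄ c₅ c₇ c₈ c_z : ℝ)
    (hc₁ : 0 < c₁) (hc₂ : 0 < c₂) (hc₃ : 0 < c₃) (hc₄ : 0 < c₄)
    (hc₅ : 0 < c₅) (hc₇ : 0 < c₇) (hc₈ : 0 < c₈) (hcz : 0 < c_z)
    (hactor : ∀ k, a (k + 1) ≤ a k - c₁ * η k * y k ^ 2 + c₂ * η k * y k * z k + c₃ * η k ^ 2)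
    (hcritic : ∀ k, z (k + 1) ^ 2 ≤ z k ^ 2 - c₄ * η k * z k ^ 2 + c₅ * η k ^ 2 + c₇ * η k * y k * z k)
    (hzbound : ∀ k, z k ≤ c_z)
    (hGDL : ∀ k, a k ≤ c₈ * y k)
    (hc₄' : c₄ ≥ (c₂ + c₇) ^ 2 / (2 * c₁)) :
    ∃ C₁ C₂ : ℝ, 0 < C₁ ∧ 0 < C₂ ∧
      ∀ k, a (k + 1) + z (k + 1) ^ 2 ≤
        a k + z k ^ 2 - C₁ * η k * (a k + z k ^ 2) ^ 2 + C₂ * η k ^ 2 := by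
  refine ⟨min (c₁ / (8 * c₈ ^ 2)) (c₄ / (6 * c_z ^ 2)), c₃ + c₅, ?_, by positivity, ?_⟩
  · exact lt_min (by positivity) (by positivity)
  intro k
  set C₁ := min (c₁ / (8 * c₈ ^ 2)) (c₄ / (6 * c_z ^ 2)) with hC₁
  have hsum := add_le_add (hactor k) (hcritic k)
  -- key: C₁ * x^2 ≤ c₁ y^2 + c₄ z^2 - (c₂+c₇) y z
  have hkey : C₁ * (a k + z k ^ 2) ^ 2 ≤
      c₁ * y k ^ 2 + c₄ * z k ^ 2 - (c₂ + c₇) * (y k * z k) := by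
    have h1 : C₁ ≤ c₁ / (8 * c₈ ^ 2) := min_le_left _ _
    have h2 : C₁ ≤ c₄ / (6 * c_z ^ 2) := min_le_right _ _
    have hC₁pos : 0 < C₁ := lt_min (by positivity) (by positivity)
    clear_value C₁
    have ha2 : a k ^ 2 ≤ c₈ ^ 2 * y k ^ 2 := by
      have := hGDL k
      nlinarith [ha k, hy k]
    have hz4 : (z k ^ 2) ^ 2 ≤ c_z ^ 2 * z k ^ 2 := by
      have hzz : z k ^ 2 ≤ c_z ^ 2 := by nlinarith [hz k, hzbound k]
      nlinarith [sq_nonneg (z k), mul_le_mul_of_nonneg_left hzz (sq_nonneg (z k))]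
    have hx2 : (a k + z k ^ 2) ^ 2 ≤ 2 * (a k ^ 2 + (z k ^ 2) ^ 2) := by nlinarith [sq_nonneg (a k - z k ^ 2)]
    have hstep1 : C₁ * (a k + z k ^ 2) ^ 2 ≤ (c₁ / 4) * y k ^ 2 + (c₄ / 3) * z k ^ 2 := by
      have e1 : C₁ * a k ^ 2 ≤ (c₁ / 8) * y k ^ 2 := by
        calc C₁ * a k ^ 2 ≤ (c₁ / (8 * c₈ ^ 2)) * (c₈ ^ 2 * y k ^ 2) := by
              apply mul_le_mul h1 ha2 (sq_nonneg _) (by positivity)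
          _ = (c₁ / 8) * y k ^ 2 := by field_simp
      have e2 : C₁ * (z k ^ 2) ^ 2 ≤ (c₄ / 6) * z k ^ 2 := by
        calc C₁ * (z k ^ 2) ^ 2 ≤ (c₄ / (6 * c_z ^ 2)) * (c_z ^ 2 * z k ^ 2) := by
              apply mul_le_mul h2 hz4 (sq_nonneg _) (by positivity)
          _ = (c₄ / 6) * z k ^ 2 := by field_simp
      have h3 := mul_le_mul_of_nonneg_left hx2 hC₁pos.le
      linarith [e1, e2, h3]
    have hcross : (c₂ + c₇) * (y k * z k) ≤ (3 * c₁ / 4) * y k ^ 2 + (2 * c₄ / 3) * z k ^ 2 := by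
      have hcc : (c₂ + c₇) ^ 2 ≤ 2 * c₁ * c₄ := by
        rw [ge_iff_le, div_le_iff₀ (by positivity)] at hc₄'
        linarith
      have hcross' : c₁ * ((c₂ + c₇) * (y k * z k)) ≤
          c₁ * ((3 * c₁ / 4) * y k ^ 2 + (2 * c₄ / 3) * z k ^ 2) := by
        nlinarith [sq_nonneg (3 * c₁ * y k - 2 * (c₂ + c₇) * z k),
          mul_le_mul_of_nonneg_left hcc (sq_nonneg (z k))]
      exact le_of_mul_le_mul_left hcross' hc₁
    linarith
  have hη' := (hη k).le
  have := mul_le_mul_of_nonneg_left hkey hη'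
  linarith [this, hsum]
end

section
/- Suppose a nonnegative sequence satisfies $x_{k+1} \le x_k - c\,\eta_k x_k^2 + C \eta_k^2$ with $\eta_k = \eta_0 (k+1)^{-2/3}$ for suitable constants $c, C, \eta_0 > 0$ and a suitable initial condition. Then $\limsup_{k\to\infty} k^{1/3} x_k < \infty$; i.e., $x_k = O(k^{-1/3})$. -/
/-- Algebraic core: if `a^3 = b^3 + 1` with `0 < b ≤ a`, then
`1/b - 1/(3 b^4) ≤ 1/a` (discrete derivative bound for `t^{-1/3}`). -/
lemma cube_root_gap (a b : ℝ) (hb : 0 < b) (hba : b ≤ a) (h : a ^ 3 = b ^ 3 + 1) :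
    1 / b - 1 / (3 * b ^ 4) ≤ 1 / a := by
  have ha : 0 < a := lt_of_lt_of_le hb hba
  have hd : 0 ≤ a - b := sub_nonneg.2 hba
  have h1 : (a - b) * (a ^ 2 + a * b + b ^ 2) = 1 := by linear_combination h
  have h2 : 3 * b ^ 2 ≤ a ^ 2 + a * b + b ^ 2 := by
    nlinarith [mul_nonneg hd (by linarith : (0:ℝ) ≤ a + 2 * b)]
  have h3 : (a - b) * (3 * b ^ 2) ≤ 1 := by
    calc (a - b) * (3 * b ^ 2) ≤ (a - b) * (a ^ 2 + a * b + b ^ 2) :=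
          mul_le_mul_of_nonneg_left h2 hd
      _ = 1 := h1
  have h4 : 3 * b ^ 3 * (a - b) ≤ b := by nlinarith [mul_le_mul_of_nonneg_left h3 hb.le]
  have key : a * (3 * b ^ 3 - 1) ≤ 3 * b ^ 4 := by nlinarith [h4, hba]
  have e : 1 / b - 1 / (3 * b ^ 4) = (3 * b ^ 3 - 1) / (3 * b ^ 4) := by
    field_simp
  rw [e, div_le_div_iff₀ (by positivity) ha]
  nlinarith [key]

theorem stmt_18 (c C η₀ : ℝ) (hc : 0 < c) (hC : 0 < C) (hη₀ : 0 < η₀)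
    (η : ℕ → ℝ) (hη : ∀ k : ℕ, η k = η₀ * ((k : ℝ) + 1) ^ (-(2 : ℝ) / 3))
    (x : ℕ → ℝ) (hx : ∀ k, 0 ≤ x k)
    (hrec : ∀ k : ℕ, x (k + 1) ≤ x k - c * η k * x k ^ 2 + C * η k ^ 2) :
    ∃ M : ℝ, ∀ k : ℕ, 1 ≤ k → (k : ℝ) ^ ((1 : ℝ) / 3) * x k ≤ M := by
  set B : ℝ := max (max (2 / (c * η₀)) (6 * C * η₀ ^ 2)) (x 0) with hBdef
  have hBpos : 0 < B :=
    lt_of_lt_of_le (by positivity) ((le_max_left _ _).trans (le_max_left _ _))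
  have hB1 : 2 ≤ c * η₀ * B := by
    have h' : 2 / (c * η₀) ≤ B := (le_max_left _ _).trans (le_max_left _ _)
    have := (div_le_iff₀ (by positivity : (0:ℝ) < c * η₀)).mp h'
    linarith [this]
  have hB2 : 6 * C * η₀ ^ 2 ≤ B := (le_max_right _ _).trans (le_max_left _ _)
  have hB0 : x 0 ≤ B := le_max_right _ _
  clear_value B
  have claim : ∀ k : ℕ, x k ≤ B / ((k : ℝ) + 1) ^ ((1 : ℝ) / 3) := by
    intro k
    induction k with
    | zero => simpa [Real.one_rpow] using hB0
    | succ k ih =>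
      set t : ℝ := (k : ℝ) + 1 with htdef
      have ht0 : (0:ℝ) < t := by positivity
      have ht1 : (1:ℝ) ≤ t := by
        have : (0:ℝ) ≤ (k : ℝ) := Nat.cast_nonneg k
        rw [htdef]; linarith
      set b : ℝ := t ^ ((1 : ℝ) / 3) with hbdef
      set a : ℝ := (t + 1) ^ ((1 : ℝ) / 3) with hadef
      have hb : 0 < b := Real.rpow_pos_of_pos ht0 _
      have ha : 0 < a := Real.rpow_pos_of_pos (by linarith) _
      have hb3 : b ^ 3 = t := by
        rw [hbdef, ← Real.rpow_natCast (t ^ ((1:ℝ)/3)) 3, ← Real.rpow_mul ht0.le]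
        norm_num
      have ha3 : a ^ 3 = t + 1 := by
        rw [hadef, ← Real.rpow_natCast ((t+1) ^ ((1:ℝ)/3)) 3,
          ← Real.rpow_mul (by linarith : (0:ℝ) ≤ t + 1)]
        norm_num
      have hba : b ≤ a := Real.rpow_le_rpow ht0.le (by linarith) (by norm_num)
      have hb31 : (1:ℝ) ≤ b ^ 3 := by rw [hb3]; exact ht1
      -- η k = η₀ / b ^ 2
      have hηk : η k = η₀ / b ^ 2 := by
        rw [hη k]
        have h23 : ((k : ℝ) + 1) ^ (-(2 : ℝ) / 3) = 1 / b ^ 2 := by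
          rw [show (-(2:ℝ)/3) = -(2/3) by ring, ← htdef, Real.rpow_neg ht0.le]
          rw [hbdef, ← Real.rpow_natCast (t ^ ((1:ℝ)/3)) 2, ← Real.rpow_mul ht0.le]
          norm_num
        rw [h23]; ring
      clear_value a b t
      -- key gap inequality scaled by B
      have hgap : B / b - B / (3 * b ^ 4) ≤ B / a := by
        have hk := cube_root_gap a b hb hba (by rw [ha3, hb3])
        have := mul_le_mul_of_nonneg_left hk hBpos.le
        calc B / b - B / (3 * b ^ 4) = B * (1 / b - 1 / (3 * b ^ 4)) := by ring
          _ ≤ B * (1 / a) := this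
          _ = B / a := by ring
      have hgoal : x (k + 1) ≤ B / b - B / (3 * b ^ 4) := by
        have hrk := hrec k
        rw [hηk] at hrk
        have e2 : B / b - B / (3 * b ^ 4) = (B * b ^ 3 - B / 3) / b ^ 4 := by
          field_simp
        rcases le_or_gt (x k) (B / (2 * b)) with hcase | hcase
        · -- small case: drop the quadratic term
          have hpos : 0 ≤ c * (η₀ / b ^ 2) * x k ^ 2 := by positivity
          have h1 : x (k + 1) ≤ B / (2 * b) + C * η₀ ^ 2 / b ^ 4 := by
            have he : C * (η₀ / b ^ 2) ^ 2 = C * η₀ ^ 2 / b ^ 4 := by ring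
            linarith [hrk, hpos, hcase, he.le, he.ge]
          have key2 : B * b ^ 3 / 2 + C * η₀ ^ 2 ≤ B * b ^ 3 - B / 3 := by
            linarith [mul_le_mul_of_nonneg_left hb31 hBpos.le, hB2]
          have e1 : B / (2 * b) + C * η₀ ^ 2 / b ^ 4
              = (B * b ^ 3 / 2 + C * η₀ ^ 2) / b ^ 4 := by
            field_simp
          rw [e2]
          refine h1.trans ?_
          rw [e1]
          gcongr
        · -- large case: quadratic term gives contraction
          have hlb : c * (η₀ / b ^ 2) * (B / (2 * b)) * x k ≤ c * (η₀ / b ^ 2) * x k ^ 2 := by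
            have h0 : B / (2 * b) * x k ≤ x k * x k :=
              mul_le_mul_of_nonneg_right hcase.le (hx k)
            have hcpos : (0:ℝ) ≤ c * (η₀ / b ^ 2) := by positivity
            have h2 := mul_le_mul_of_nonneg_left h0 hcpos
            calc c * (η₀ / b ^ 2) * (B / (2 * b)) * x k
                = c * (η₀ / b ^ 2) * (B / (2 * b) * x k) := by ring
              _ ≤ c * (η₀ / b ^ 2) * (x k * x k) := h2
              _ = c * (η₀ / b ^ 2) * x k ^ 2 := by ring
          have h1 : x (k + 1) ≤ x k * (1 - c * η₀ * B / (2 * b ^ 3)) + C * η₀ ^ 2 / b ^ 4 := by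
            have he : x k - c * (η₀ / b ^ 2) * (B / (2 * b)) * x k + C * (η₀ / b ^ 2) ^ 2
                = x k * (1 - c * η₀ * B / (2 * b ^ 3)) + C * η₀ ^ 2 / b ^ 4 := by
              field_simp
            rw [← he]
            linarith [hrk, hlb]
          have hs : 1 / b ^ 3 ≤ c * η₀ * B / (2 * b ^ 3) := by
            rw [div_le_div_iff₀ (by positivity) (by positivity)]
            linarith [mul_le_mul_of_nonneg_right hB1 (pow_pos hb 3).le]
          have hfrac : 1 / b ^ 3 ≤ 1 := by
            rw [div_le_one (by positivity)]; exact hb31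
          have ihb : x k ≤ B / b := ih
          have hmain : x k * (1 - c * η₀ * B / (2 * b ^ 3)) ≤ B / b * (1 - 1 / b ^ 3) := by
            rcases le_or_gt (1 - c * η₀ * B / (2 * b ^ 3)) 0 with hneg | hposr
            · have hl : x k * (1 - c * η₀ * B / (2 * b ^ 3)) ≤ 0 :=
                mul_nonpos_of_nonneg_of_nonpos (hx k) hneg
              have hr : 0 ≤ B / b * (1 - 1 / b ^ 3) := by
                apply mul_nonneg (by positivity); linarith
              linarith
            · exact mul_le_mul ihb (by linarith) hposr.le (by positivity)
          have e3 : B / b * (1 - 1 / b ^ 3) + C * η₀ ^ 2 / b ^ 4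
              = (B * b ^ 3 - B + C * η₀ ^ 2) / b ^ 4 := by
            field_simp
          have key3 : B * b ^ 3 - B + C * η₀ ^ 2 ≤ B * b ^ 3 - B / 3 := by
            linarith [hB2, hBpos]
          rw [e2]
          calc x (k + 1) ≤ x k * (1 - c * η₀ * B / (2 * b ^ 3)) + C * η₀ ^ 2 / b ^ 4 := h1
            _ ≤ B / b * (1 - 1 / b ^ 3) + C * η₀ ^ 2 / b ^ 4 := by linarith
            _ = (B * b ^ 3 - B + C * η₀ ^ 2) / b ^ 4 := e3
            _ ≤ (B * b ^ 3 - B / 3) / b ^ 4 := by gcongr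
      calc x (k + 1) ≤ B / b - B / (3 * b ^ 4) := hgoal
        _ ≤ B / a := hgap
        _ = B / ((((k : ℕ) + 1 : ℕ) : ℝ) + 1) ^ ((1:ℝ)/3) := by
            rw [hadef, htdef]; push_cast; ring_nf
  refine ⟨B, fun k hk => ?_⟩
  have hk1 : (1:ℝ) ≤ (k : ℝ) := by exact_mod_cast hk
  have hq : (0:ℝ) < ((k : ℝ) + 1) ^ ((1 : ℝ) / 3) := Real.rpow_pos_of_pos (by linarith) _
  have hpq : (k : ℝ) ^ ((1 : ℝ) / 3) ≤ ((k : ℝ) + 1) ^ ((1 : ℝ) / 3) :=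
    Real.rpow_le_rpow (by linarith) (by linarith) (by norm_num)
  calc (k : ℝ) ^ ((1 : ℝ) / 3) * x k
      ≤ ((k : ℝ) + 1) ^ ((1 : ℝ) / 3) * (B / ((k : ℝ) + 1) ^ ((1 : ℝ) / 3)) :=
        mul_le_mul hpq (claim k) (hx k) hq.le
    _ = B := by field_simp
end
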